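/- arXiv:2605.19392 — 5 statements merged into one kernel-verified Lean document; each statement's English description precedes it below -/
import Mathlib

section
/- Let λ ∈ ℂ with Re(λ) < 0 and |Im(λ)| > |Re(λ)|, and let h, ε > 0 and β ∈ (-1,1) with γ = h(1+β)/(2√ε(1-β)). Then Re((1 - γλ)λ) < 0 if and only if 0 < h < 2√ε(1-β)|Re(λ)| / ((1+β)(Im(λ)² - Re(λ)²)). -/
theorem stmt1 (lam : ℂ) (hre : lam.re < 0) (him : |lam.re| < |lam.im|)
    (h ε β : ℝ) (hh : 0 < h) (hε : 0 < ε) (hβ : β ∈ Set.Ioo (-1 : ℝ) 1)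
    (γ : ℝ) (hγ : γ = h * (1 + β) / (2 * Real.sqrt ε * (1 - β))) :
    ((1 - (γ : ℂ) * lam) * lam).re < 0 ↔
      0 < h ∧ h < 2 * Real.sqrt ε * (1 - β) * |lam.re| /
          ((1 + β) * (lam.im ^ 2 - lam.re ^ 2)) := by
  obtain ⟨hβ1, hβ2⟩ := hβ
  have h1 : 0 < 1 - β := by linarith
  have h2 : 0 < 1 + β := by linarith
  have hs : 0 < Real.sqrt ε := Real.sqrt_pos.mpr hε
  have hd : 0 < lam.im ^ 2 - lam.re ^ 2 := by
    have := sq_lt_sq' (neg_lt_of_abs_lt him) (lt_of_abs_lt him)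
    rw [sq_abs] at this; linarith
  have habs : |lam.re| = -lam.re := abs_of_neg hre
  have hlhs : ((1 - (γ : ℂ) * lam) * lam).re
      = lam.re + γ * (lam.im ^ 2 - lam.re ^ 2) := by
    simp [Complex.mul_re, Complex.sub_re, Complex.sub_im, Complex.one_re,
      Complex.one_im, Complex.ofReal_re, Complex.ofReal_im]
    ring
  rw [hlhs, habs, hγ]
  have hden : 0 < (1 + β) * (lam.im ^ 2 - lam.re ^ 2) := mul_pos h2 hd
  have hden2 : 0 < 2 * Real.sqrt ε * (1 - β) := by positivity
  rw [div_mul_eq_mul_div,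
    show ∀ x : ℝ, lam.re + x < 0 ↔ x < -lam.re from fun x => by constructor <;> intro <;> linarith,
    div_lt_iff₀ hden2, lt_div_iff₀ hden]
  constructor
  · intro hlt
    refine ⟨hh, ?_⟩
    nlinarith
  · rintro ⟨-, hlt⟩
    nlinarith
end

section
/- Let λ ∈ ℂ with Re(λ) < 0, let β ∈ (-1,1), ε > 0, and h > 0. Both roots of the quadratic μ² - (β + 1 + (h(1-β)/√ε)λ)μ + β = 0 lie in the open unit disk if and only if h < 2√ε(1-β²)|Re(λ)| / ((1+β²)|λ|² + 2β(Im(λ)² - Re(λ)²)). -/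
/-!
Schur–Cohn: for real `β` with `|β| < 1`, both roots of `μ² - bμ + β` lie in the open unit disk
iff `‖b - β b̄‖ < 1 - β²`. Writing `b = u + v`, `β = uv`, one has
`b - β b̄ = (1 - ‖u‖²) v + (1 - ‖v‖²) u`, and both directions follow from the triangle inequality
and `1 - ‖uv‖² - ‖v‖(1 - ‖u‖²) - ‖u‖(1 - ‖v‖²) = (1 - ‖u‖)(1 - ‖v‖)(1 - ‖uv‖)`.
For `b = β + 1 + cλ` with `c = h(1 - β)/√ε` we get `b - β b̄ = (1 - β²) + c w` with `w = λ - β λ̄`,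
so after squaring the criterion reads `c‖w‖² + 2(1 - β²)(1 - β) Re λ < 0`; the denominator of the
bound is `‖w‖²`.
-/

open ComplexConjugate

namespace Complex

lemma exists_add_eq_and_mul_eq (b p : ℂ) : ∃ u v : ℂ, u + v = b ∧ u * v = p := by
  obtain ⟨s, hs⟩ := IsAlgClosed.exists_pow_nat_eq (b ^ 2 - 4 * p) two_pos
  exact ⟨(b + s) / 2, (b - s) / 2, by ring, by linear_combination -hs / 4⟩

section SchurCohn

variable {u v : ℂ} {β : ℝ}

lemma add_sub_mul_conj_add_of_mul_eq (huv : u * v = β) :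
    u + v - β * conj (u + v) = (1 - ‖u‖ ^ 2 : ℝ) • v + (1 - ‖v‖ ^ 2 : ℝ) • u := by
  simp only [real_smul, ← huv, map_add, ofReal_sub, ofReal_one, ofReal_pow, ← mul_conj']
  ring

lemma sq_eq_sq_norm_mul_norm_of_mul_eq (huv : u * v = β) : β ^ 2 = (‖u‖ * ‖v‖) ^ 2 := by
  rw [← norm_mul, huv, norm_real, Real.norm_eq_abs, sq_abs]

lemma norm_add_sub_mul_conj_add_lt (huv : u * v = β) (hu : ‖u‖ < 1) (hv : ‖v‖ < 1) :
    ‖u + v - β * conj (u + v)‖ < 1 - β ^ 2 := by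
  rw [add_sub_mul_conj_add_of_mul_eq huv, sq_eq_sq_norm_mul_norm_of_mul_eq huv]
  have hst : ‖u‖ * ‖v‖ < 1 := by nlinarith [norm_nonneg u, norm_nonneg v]
  calc _ ≤ ‖(1 - ‖u‖ ^ 2 : ℝ) • v‖ + ‖(1 - ‖v‖ ^ 2 : ℝ) • u‖ := norm_add_le _ _
    _ = (1 - ‖u‖ ^ 2) * ‖v‖ + (1 - ‖v‖ ^ 2) * ‖u‖ := by
      rw [norm_smul, norm_smul, Real.norm_of_nonneg, Real.norm_of_nonneg] <;>
        nlinarith [norm_nonneg u, norm_nonneg v]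
    _ < 1 - (‖u‖ * ‖v‖) ^ 2 := by
      linear_combination mul_pos (mul_pos (sub_pos.2 hu) (sub_pos.2 hv)) (sub_pos.2 hst)

lemma one_sub_sq_le_norm_add_sub_mul_conj_add (huv : u * v = β) (hβ : |β| < 1) (hu : 1 ≤ ‖u‖) :
    1 - β ^ 2 ≤ ‖u + v - β * conj (u + v)‖ := by
  have hst : ‖u‖ * ‖v‖ = |β| := by rw [← norm_mul, huv, norm_real, Real.norm_eq_abs]
  have hv : ‖v‖ < 1 := by nlinarith [norm_nonneg v]
  rw [add_sub_mul_conj_add_of_mul_eq huv, sq_eq_sq_norm_mul_norm_of_mul_eq huv, add_comm]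
  calc 1 - (‖u‖ * ‖v‖) ^ 2 ≤ (1 - ‖v‖ ^ 2) * ‖u‖ - (‖u‖ ^ 2 - 1) * ‖v‖ := by
        nlinarith [mul_nonneg (mul_nonneg (sub_nonneg.2 hu) (sub_pos.2 hv).le)
          (by nlinarith : 0 ≤ 1 - ‖u‖ * ‖v‖)]
    _ = ‖(1 - ‖v‖ ^ 2 : ℝ) • u‖ - ‖(1 - ‖u‖ ^ 2 : ℝ) • v‖ := by
      rw [norm_smul, norm_smul, Real.norm_of_nonneg (by nlinarith [norm_nonneg v]),
        Real.norm_of_nonpos (by nlinarith)]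
      ring
    _ ≤ _ := norm_sub_le_norm_add _ _

end SchurCohn

theorem schur_cohn_quadratic {b : ℂ} {β : ℝ} (hβ : |β| < 1) :
    (∀ μ : ℂ, μ ^ 2 - b * μ + β = 0 → ‖μ‖ < 1) ↔ ‖b - β * conj b‖ < 1 - β ^ 2 := by
  obtain ⟨u, v, rfl, huv⟩ := exists_add_eq_and_mul_eq b β
  have roots (μ : ℂ) : μ ^ 2 - (u + v) * μ + β = 0 ↔ μ = u ∨ μ = v := by
    rw [← huv, show μ ^ 2 - (u + v) * μ + u * v = (μ - u) * (μ - v) by ring, mul_eq_zero,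
      sub_eq_zero, sub_eq_zero]
  simp only [roots, forall_eq_or_imp, forall_eq]
  refine ⟨fun ⟨hu, hv⟩ => norm_add_sub_mul_conj_add_lt huv hu hv, fun h => ⟨?_, ?_⟩⟩
  · by_contra! hu
    exact (one_sub_sq_le_norm_add_sub_mul_conj_add huv hβ hu).not_gt h
  · by_contra! hv
    rw [add_comm] at h
    exact (one_sub_sq_le_norm_add_sub_mul_conj_add ((mul_comm v u).trans huv) hβ hv).not_gt h

lemma norm_ofReal_add_ofReal_mul_lt_iff {D c : ℝ} (hD : 0 < D) (hc : 0 < c) (w : ℂ) :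
    ‖(D + c * w : ℂ)‖ < D ↔ c * ‖w‖ ^ 2 + 2 * D * w.re < 0 := by
  rw [← pow_lt_pow_iff_left₀ (norm_nonneg _) hD.le two_ne_zero, ← sub_neg,
    Complex.sq_norm, Complex.sq_norm, normSq_apply, normSq_apply]
  simp only [add_re, add_im, re_ofReal_mul, im_ofReal_mul, ofReal_re, ofReal_im]
  rw [show (D + c * w.re) * (D + c * w.re) + (0 + c * w.im) * (0 + c * w.im) - D ^ 2
      = c * (c * (w.re * w.re + w.im * w.im) + 2 * D * w.re) by ring]
  simp [mul_neg_iff, hc, hc.not_gt]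

lemma sub_ofReal_mul_conj_re (w : ℂ) (β : ℝ) : (w - β * conj w).re = (1 - β) * w.re := by
  simp only [sub_re, re_ofReal_mul, conj_re]
  ring

lemma sq_norm_sub_ofReal_mul_conj (w : ℂ) (β : ℝ) :
    ‖w - β * conj w‖ ^ 2 = (1 + β ^ 2) * ‖w‖ ^ 2 + 2 * β * (w.im ^ 2 - w.re ^ 2) := by
  simp only [Complex.sq_norm, normSq_apply, sub_re, sub_im, re_ofReal_mul, im_ofReal_mul, conj_re,
    conj_im]
  ring

lemma ofReal_add_one_add_mul_sub_mul_conj (lam : ℂ) (β c : ℝ) :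
    (β + 1 + c * lam : ℂ) - β * conj (β + 1 + c * lam)
      = (1 - β ^ 2 : ℝ) + c * (lam - β * conj lam) := by
  simp only [map_add, map_mul, conj_ofReal, map_one]
  push_cast
  ring

end Complex

theorem stmt5 (lam : ℂ) (hre : lam.re < 0) (β ε h : ℝ)
    (hβ : β ∈ Set.Ioo (-1 : ℝ) 1) (hε : 0 < ε) (hh : 0 < h) :
    (∀ μ : ℂ,
        μ ^ 2 - ((β : ℂ) + 1 + ((h * (1 - β) / Real.sqrt ε : ℝ) : ℂ) * lam) * μ + (β : ℂ) = 0 →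
        ‖μ‖ < 1) ↔
      h < 2 * Real.sqrt ε * (1 - β ^ 2) * |lam.re| /
          ((1 + β ^ 2) * ‖lam‖ ^ 2 + 2 * β * (lam.im ^ 2 - lam.re ^ 2)) := by
  obtain ⟨hβ1, hβ2⟩ := hβ
  have h1β : 0 < 1 - β := sub_pos.2 hβ2
  have hD : 0 < 1 - β ^ 2 := by nlinarith
  have hr : 0 < √ε := Real.sqrt_pos.2 hε
  have hc : 0 < h * (1 - β) / √ε := by positivity
  have hw : 0 < ‖lam - β * conj lam‖ := by
    refine lt_of_lt_of_le ?_ (Complex.abs_re_le_norm _)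
    rw [Complex.sub_ofReal_mul_conj_re, abs_pos]
    exact (mul_neg_of_pos_of_neg h1β hre).ne
  rw [Complex.schur_cohn_quadratic (abs_lt.2 ⟨hβ1, hβ2⟩),
    Complex.ofReal_add_one_add_mul_sub_mul_conj, Complex.norm_ofReal_add_ofReal_mul_lt_iff hD hc, Complex.sub_ofReal_mul_conj_re,
    ← Complex.sq_norm_sub_ofReal_mul_conj, lt_div_iff₀ (by positivity), abs_of_neg hre,
    ← mul_lt_mul_iff_right₀ (by positivity : 0 < √ε / (1 - β)), mul_zero,
    ← sub_neg (a := h * _)]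
  refine iff_of_eq (congrArg (· < 0) ?_)
  field_simp
  ring
end

section
/- For λ ∈ ℂ with Re(λ) < 0 ≠ λ, the function β ↦ 2√ε(1-β²)|Re(λ)| / ((1+β²)|λ|² + 2β(Im(λ)² - Re(λ)²)) is strictly decreasing on the interval ((|Re(λ)| - |Im(λ)|)/(|Re(λ)| + |Im(λ)|), 1). -/
/-!
The denominator is `(re λ)² (1 - β)² + (im λ)² (1 + β)²`, so after the substitution
`t = (1 - β) / (1 + β)`, which decreases in `β`, the function becomes a positive multiple of
`t / ((re λ)² t² + (im λ)²)`. This is increasing exactly while `|re λ| t < |im λ|`, which is the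
condition that `β` lies above the left endpoint of the interval.
-/

lemma Complex.one_add_sq_mul_sq_norm_add_two_mul_eq (z : ℂ) (β : ℝ) :
    (1 + β ^ 2) * ‖z‖ ^ 2 + 2 * β * (z.im ^ 2 - z.re ^ 2) =
      (z.re * (1 - β)) ^ 2 + (z.im * (1 + β)) ^ 2 := by
  rw [Complex.sq_norm, Complex.normSq_apply]
  ring

lemma abs_mul_one_sub_lt_of_div_lt {a b β : ℝ} (ha : a ≠ 0)
    (hβ : (|a| - |b|) / (|a| + |b|) < β) : |a| * (1 - β) < |b| * (1 + β) := by
  have hab : 0 < |a| + |b| := by positivity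
  linarith [(div_lt_iff₀ hab).mp hβ]

lemma strictAntiOn_one_sub_sq_div {a b : ℝ} (ha : a ≠ 0) :
    StrictAntiOn (fun β : ℝ => (1 - β ^ 2) / ((a * (1 - β)) ^ 2 + (b * (1 + β)) ^ 2))
      (Set.Ioo ((|a| - |b|) / (|a| + |b|)) 1) := by
  intro x ⟨hx, hx1⟩ y ⟨hy, hy1⟩ hxy
  have hax := abs_mul_one_sub_lt_of_div_lt ha hx
  have hay := abs_mul_one_sub_lt_of_div_lt ha hy
  have key : a ^ 2 * (1 - x) * (1 - y) < b ^ 2 * (1 + x) * (1 + y) :=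
    calc a ^ 2 * (1 - x) * (1 - y) = |a| * (1 - x) * (|a| * (1 - y)) := by
          rw [← sq_abs a]; ring
      _ < |b| * (1 + x) * (|b| * (1 + y)) :=
          mul_lt_mul'' hax hay (by nlinarith [abs_nonneg a]) (by nlinarith [abs_nonneg a])
      _ = b ^ 2 * (1 + x) * (1 + y) := by rw [← sq_abs b]; ring
  have hdx : 0 < (a * (1 - x)) ^ 2 + (b * (1 + x)) ^ 2 := by
    have : a * (1 - x) ≠ 0 := mul_ne_zero ha (by linarith)
    positivity
  have hdy : 0 < (a * (1 - y)) ^ 2 + (b * (1 + y)) ^ 2 := by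
    have : a * (1 - y) ≠ 0 := mul_ne_zero ha (by linarith)
    positivity
  rw [div_lt_div_iff₀ hdy hdx]
  -- the difference of the two sides is `2 (y - x) (b² (1 + x)(1 + y) - a² (1 - x)(1 - y))`
  linear_combination 2 * mul_pos (sub_pos.2 hxy) (sub_pos.2 key)

theorem stmt6_general (lam : ℂ) (hre : lam.re < 0) (ε : ℝ) (hε : 0 < ε) :
    StrictAntiOn (fun β : ℝ =>
        2 * Real.sqrt ε * (1 - β ^ 2) * |lam.re| /
          ((1 + β ^ 2) * ‖lam‖ ^ 2 + 2 * β * (lam.im ^ 2 - lam.re ^ 2)))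
      (Set.Ioo ((|lam.re| - |lam.im|) / (|lam.re| + |lam.im|)) 1) := by
  have hc : 0 < 2 * Real.sqrt ε * |lam.re| := by
    have := Real.sqrt_pos.mpr hε
    have := abs_pos.mpr hre.ne
    positivity
  intro x hx y hy hxy
  simp only [Complex.one_add_sq_mul_sq_norm_add_two_mul_eq]
  rw [mul_right_comm _ (1 - x ^ 2), mul_right_comm _ (1 - y ^ 2), mul_div_assoc, mul_div_assoc]
  exact mul_lt_mul_of_pos_left (strictAntiOn_one_sub_sq_div hre.ne hx hy hxy) hc

theorem stmt6 (lam : ℂ) (hlam : lam ≠ 0) (hre : lam.re < 0) (ε : ℝ) (hε : 0 < ε) :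
    StrictAntiOn (fun β : ℝ =>
        2 * Real.sqrt ε * (1 - β ^ 2) * |lam.re| /
          ((1 + β ^ 2) * ‖lam‖ ^ 2 + 2 * β * (lam.im ^ 2 - lam.re ^ 2)))
      (Set.Ioo ((|lam.re| - |lam.im|) / (|lam.re| + |lam.im|)) 1) :=
  stmt6_general lam hre ε hε
end

section
/- Let ρ ∈ (0,1), ε > 0, v ≥ 0 and n ≥ 0. Then (1/√(v+ε) - 1/√(v + (1-ρ^{n+1})ε))² ≤ (ρ^{n+1} / (√ε √(1-ρ)(1 + √(1-ρ))))². -/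
theorem stmt13 (ρ ε v : ℝ) (hρ : ρ ∈ Set.Ioo (0 : ℝ) 1) (hε : 0 < ε) (hv : 0 ≤ v) (n : ℕ) :
    (1 / Real.sqrt (v + ε) - 1 / Real.sqrt (v + (1 - ρ ^ (n + 1)) * ε)) ^ 2 ≤
      (ρ ^ (n + 1) / (Real.sqrt ε * Real.sqrt (1 - ρ) * (1 + Real.sqrt (1 - ρ)))) ^ 2 := by
  obtain ⟨hρ0, hρ1⟩ := hρ
  set t := ρ ^ (n + 1) with ht
  have ht0 : 0 < t := pow_pos hρ0 _
  have htρ : t ≤ ρ := by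
    calc t ≤ ρ ^ 1 := pow_le_pow_of_le_one hρ0.le hρ1.le (by omega)
    _ = ρ := pow_one ρ
  have h1ρ : 0 < 1 - ρ := by linarith
  have hb0 : 0 < v + (1 - t) * ε := by nlinarith
  have ha0 : 0 < v + ε := by linarith
  set sa := Real.sqrt (v + ε) with hsa_def
  set sb := Real.sqrt (v + (1 - t) * ε) with hsb_def
  set se := Real.sqrt ε with hse_def
  set sr := Real.sqrt (1 - ρ) with hsr_def
  have hsa : 0 < sa := Real.sqrt_pos.mpr ha0
  have hsb : 0 < sb := Real.sqrt_pos.mpr hb0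
  have hse : 0 < se := Real.sqrt_pos.mpr hε
  have hsr : 0 < sr := Real.sqrt_pos.mpr h1ρ
  have hsa2 : sa ^ 2 = v + ε := Real.sq_sqrt ha0.le
  have hsb2 : sb ^ 2 = v + (1 - t) * ε := Real.sq_sqrt hb0.le
  have hse2 : se ^ 2 = ε := Real.sq_sqrt hε.le
  have hsr2 : sr ^ 2 = 1 - ρ := Real.sq_sqrt h1ρ.le
  have h1 : se ≤ sa := Real.sqrt_le_sqrt (by linarith)
  have h2 : sr * se ≤ sb := by
    have hm : sr * se = Real.sqrt ((1 - ρ) * ε) := (Real.sqrt_mul h1ρ.le ε).symm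
    rw [hm]
    exact Real.sqrt_le_sqrt (by nlinarith)
  have hba : sb ≤ sa := Real.sqrt_le_sqrt (by nlinarith)
  have hR : 0 < t / (se * sr * (1 + sr)) := by positivity
  apply sq_le_sq'
  · rw [neg_le, neg_sub]
    rw [div_sub_div _ _ hsb.ne' hsa.ne', div_le_div_iff₀ (by positivity) (by positivity), one_mul, mul_one]
    have key : (sa - sb) * (sa + sb) = t * ε := by
      linear_combination hsa2 - hsb2
    have A1 : ε * (sr * se) ≤ sa ^ 2 * sb :=
      mul_le_mul (by nlinarith) h2 (by positivity) (by positivity)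
    have A2 : se * (sr ^ 2 * se ^ 2) ≤ sa * sb ^ 2 :=
      mul_le_mul h1 (by nlinarith) (by positivity) hsa.le
    have hden : ε * (se * sr * (1 + sr)) ≤ sa * sb * (sa + sb) := by
      calc ε * (se * sr * (1 + sr)) = ε * (sr * se) + se * (sr ^ 2 * se ^ 2) := by
            rw [← hse2]; ring
        _ ≤ sa ^ 2 * sb + sa * sb ^ 2 := add_le_add A1 A2
        _ = sa * sb * (sa + sb) := by ring
    have step : t * (ε * (se * sr * (1 + sr))) ≤ t * (sa * sb * (sa + sb)) :=
      mul_le_mul_of_nonneg_left hden ht0.le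
    have final : (sa - sb) * (se * sr * (1 + sr)) * (sa + sb) ≤ t * (sb * sa) * (sa + sb) := by
      calc (sa - sb) * (se * sr * (1 + sr)) * (sa + sb)
          = t * (ε * (se * sr * (1 + sr))) := by linear_combination (se * sr * (1 + sr)) * key
        _ ≤ t * (sa * sb * (sa + sb)) := step
        _ = t * (sb * sa) * (sa + sb) := by ring
    exact le_of_mul_le_mul_right final (by positivity)
  · have hle : 1 / sa - 1 / sb ≤ 0 := by
      apply sub_nonpos.mpr
      exact one_div_le_one_div_of_le hsb hba
    linarith [hR.le]
end

section
/- Let S be a real symmetric matrix of the block form diag(-H_x, H_y) with H_x ⪰ 0 and H_y ⪯ 0, and let A be an antisymmetric matrix of the block form [[0, -B], [Bᵀ, 0]]. Suppose no nonzero eigenvector of A lies in the kernel of S, and every eigenvalue λ of J = S + A satisfies |Im(λ)| > |Re(λ)| or Re(λ) ≠ 0. If additionally every eigenvector of A avoids Ker(S) (as assumed), then every eigenvalue λ of J satisfies Re(λ) < 0. -/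
/-!
Let `v` be an eigenvector of `J = S + A` for `λ`. Since `A` is skew-symmetric, `v* A v` is purely
imaginary, so `Re λ · ‖v‖² = Re (v* S v) ≤ 0` because `-S` is positive semidefinite. If
`Re λ = 0`, then `v* S v = 0`, hence `S v = 0` and `A v = λ v`: an eigenvector of `A` in `Ker S`.
-/

open Matrix ComplexOrder

namespace Matrix

theorem exists_mulVec_eq_smul_of_mem_spectrum {n K : Type*} [Fintype n] [DecidableEq n] [Field K]
    {M : Matrix n n K} {μ : K} (hμ : μ ∈ spectrum K M) : ∃ v ≠ 0, M *ᵥ v = μ • v := by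
  rw [← spectrum_toLin', ← Module.End.hasEigenvalue_iff_mem_spectrum] at hμ
  obtain ⟨v, hv, hv0⟩ := hμ.exists_hasEigenvector
  exact ⟨v, hv0, by simpa using Module.End.mem_eigenspace_iff.mp hv⟩

theorem PosSemidef.fromBlocks_zero {m n R : Type*} [Fintype m] [Fintype n] [Ring R]
    [PartialOrder R] [StarRing R] [AddLeftMono R] {A : Matrix m m R} {D : Matrix n n R}
    (hA : A.PosSemidef) (hD : D.PosSemidef) : (fromBlocks A 0 0 D).PosSemidef := by
  refine .of_dotProduct_mulVec_nonneg (hA.isHermitian.fromBlocks (by simp) hD.isHermitian)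
    fun x ↦ ?_
  rw [← Sum.elim_comp_inl_inr x, fromBlocks_mulVec, Function.star_sumElim]
  simpa [sumElim_dotProduct_sumElim] using
    add_nonneg (hA.dotProduct_mulVec_nonneg _) (hD.dotProduct_mulVec_nonneg _)

theorem conjTranspose_map_ofReal {m n : Type*} (M : Matrix m n ℝ) :
    (M.map (algebraMap ℝ ℂ))ᴴ = Mᵀ.map (algebraMap ℝ ℂ) := by
  ext i j
  simp [Complex.conj_ofReal]

open scoped MatrixOrder in
theorem PosSemidef.map_ofReal {n : Type*} [Fintype n] {M : Matrix n n ℝ} (hM : M.PosSemidef) :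
    (M.map (algebraMap ℝ ℂ)).PosSemidef := by
  classical
  obtain ⟨C, rfl⟩ : ∃ C : Matrix n n ℝ, M = Cᵀ * C := by
    refine ⟨CFC.sqrt M, ?_⟩
    rw [← conjTranspose_eq_transpose_of_trivial, (CFC.sqrt_nonneg M).posSemidef.isHermitian.eq,
      CFC.sqrt_mul_sqrt_self M hM.nonneg]
  rw [Matrix.map_mul, ← conjTranspose_map_ofReal]
  exact posSemidef_conjTranspose_mul_self _

section NegSemidefAddSkew

variable {n 𝕜 : Type*} [Fintype n] [RCLike 𝕜] {S A : Matrix n n 𝕜} {μ : 𝕜} {v : n → 𝕜}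

theorem re_dotProduct_mulVec_eq_zero_of_conjTranspose_eq_neg (hA : Aᴴ = -A) (v : n → 𝕜) :
    RCLike.re (star v ⬝ᵥ A *ᵥ v) = 0 := by
  have hstar : star (star v ⬝ᵥ A *ᵥ v) = -(star v ⬝ᵥ A *ᵥ v) := by
    rw [← star_dotProduct, star_mulVec, hA, ← dotProduct_mulVec, neg_mulVec, dotProduct_neg]
  exact self_eq_neg.mp (by simpa using congrArg RCLike.re hstar)

theorem re_eigenvalue_mul_re_dotProduct_star_self (hA : Aᴴ = -A) (hv : (S + A) *ᵥ v = μ • v) :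
    RCLike.re μ * RCLike.re (star v ⬝ᵥ v) = RCLike.re (star v ⬝ᵥ S *ᵥ v) := by
  have h := congrArg (fun w ↦ RCLike.re (star v ⬝ᵥ w)) hv
  simp only [add_mulVec, dotProduct_add, map_add, dotProduct_smul, smul_eq_mul,
    re_dotProduct_mulVec_eq_zero_of_conjTranspose_eq_neg hA, add_zero] at h
  rw [h, RCLike.mul_re, (RCLike.nonneg_iff.mp (dotProduct_star_self_nonneg v)).2, mul_zero,
    sub_zero]

theorem re_eigenvalue_nonpos (hS : (-S).PosSemidef) (hA : Aᴴ = -A) (hv0 : v ≠ 0)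
    (hv : (S + A) *ᵥ v = μ • v) : RCLike.re μ ≤ 0 := by
  have hq : RCLike.re (star v ⬝ᵥ S *ᵥ v) ≤ 0 := by
    simpa [neg_mulVec] using hS.re_dotProduct_nonneg v
  have ht : 0 < RCLike.re (star v ⬝ᵥ v) :=
    (RCLike.pos_iff.mp (dotProduct_star_self_pos_iff.mpr hv0)).1
  rw [← re_eigenvalue_mul_re_dotProduct_star_self hA hv] at hq
  exact nonpos_of_mul_nonpos_left hq ht

theorem mulVec_eq_zero_of_re_eigenvalue_eq_zero (hS : (-S).PosSemidef) (hA : Aᴴ = -A)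
    (hv : (S + A) *ᵥ v = μ • v) (hμ : RCLike.re μ = 0) : S *ᵥ v = 0 := by
  have hq : RCLike.re (star v ⬝ᵥ (-S) *ᵥ v) = 0 := by
    simp [neg_mulVec, ← re_eigenvalue_mul_re_dotProduct_star_self hA hv, hμ]
  have hq0 : star v ⬝ᵥ (-S) *ᵥ v = 0 :=
    RCLike.ext (by simpa using hq)
      (by simpa using (RCLike.nonneg_iff.mp (hS.dotProduct_mulVec_nonneg v)).2)
  simpa [neg_mulVec] using (hS.dotProduct_mulVec_zero_iff v).mp hq0

end NegSemidefAddSkew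

end Matrix

theorem stmt16_general {d₁ d₂ : ℕ}
    (Hx : Matrix (Fin d₁) (Fin d₁) ℝ) (Hy : Matrix (Fin d₂) (Fin d₂) ℝ)
    (B : Matrix (Fin d₁) (Fin d₂) ℝ)
    (hHx : Hx.PosSemidef) (hHy : (-Hy).PosSemidef)
    (S A : Matrix (Fin d₁ ⊕ Fin d₂) (Fin d₁ ⊕ Fin d₂) ℝ)
    (hS : S = Matrix.fromBlocks (-Hx) 0 0 Hy)
    (hA : A = Matrix.fromBlocks 0 (-B) Bᵀ 0)
    (hker : ∀ v : (Fin d₁ ⊕ Fin d₂) → ℂ, v ≠ 0 →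
      (∃ μ : ℂ, (A.map (algebraMap ℝ ℂ)).mulVec v = μ • v) →
      (S.map (algebraMap ℝ ℂ)).mulVec v ≠ 0) :
    ∀ lam ∈ spectrum ℂ ((S + A).map (algebraMap ℝ ℂ)), lam.re < 0 := by
  intro lam hlam
  have hSc : (-S.map (algebraMap ℝ ℂ)).PosSemidef := by
    rw [← Matrix.map_neg _ (map_neg _), hS, fromBlocks_neg, neg_neg, neg_zero, neg_zero]
    exact (hHx.fromBlocks_zero hHy).map_ofReal
  have hAc : (A.map (algebraMap ℝ ℂ))ᴴ = -A.map (algebraMap ℝ ℂ) := by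
    rw [conjTranspose_map_ofReal, ← Matrix.map_neg _ (map_neg _), hA, fromBlocks_transpose,
      fromBlocks_neg]
    simp
  rw [Matrix.map_add _ (map_add _)] at hlam
  obtain ⟨v, hv0, hv⟩ := exists_mulVec_eq_smul_of_mem_spectrum hlam
  refine (re_eigenvalue_nonpos hSc hAc hv0 hv).lt_of_ne fun hre ↦ ?_
  have hSv := mulVec_eq_zero_of_re_eigenvalue_eq_zero hSc hAc hv hre
  exact hker v hv0 ⟨lam, by rwa [add_mulVec, hSv, zero_add] at hv⟩ hSv

theorem stmt16 {d₁ d₂ : ℕ}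
    (Hx : Matrix (Fin d₁) (Fin d₁) ℝ) (Hy : Matrix (Fin d₂) (Fin d₂) ℝ)
    (B : Matrix (Fin d₁) (Fin d₂) ℝ)
    (hHx : Hx.PosSemidef) (hHy : (-Hy).PosSemidef)
    (S A : Matrix (Fin d₁ ⊕ Fin d₂) (Fin d₁ ⊕ Fin d₂) ℝ)
    (hS : S = Matrix.fromBlocks (-Hx) 0 0 Hy)
    (hA : A = Matrix.fromBlocks 0 (-B) Bᵀ 0)
    (hker : ∀ v : (Fin d₁ ⊕ Fin d₂) → ℂ, v ≠ 0 →
      (∃ μ : ℂ, (A.map (algebraMap ℝ ℂ)).mulVec v = μ • v) →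
      (S.map (algebraMap ℝ ℂ)).mulVec v ≠ 0)
    (hspec : ∀ lam ∈ spectrum ℂ ((S + A).map (algebraMap ℝ ℂ)),
      |lam.re| < |lam.im| ∨ lam.re ≠ 0) :
    ∀ lam ∈ spectrum ℂ ((S + A).map (algebraMap ℝ ℂ)), lam.re < 0 :=
  stmt16_general Hx Hy B hHx hHy S A hS hA hker
end
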